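/- A composition of two maps between pseudometric spaces, each equivalent (over the codomain) to an isometric embedding, is itself equivalent to an isometric embedding: if l : W → X factors as l = g₁⁻¹∘l′ with l′ isometric embedding composed with an isomorphism, and similarly for m : X → Z, then m∘l is isomorphic in the slice category over Z to an isometric embedding. -/

import Mathlib

open Set

/-- A pseudometric space of diameter ≤ 1. -/
structure PMet where
  carrier : Type
  d : carrier → carrier → ℝ
  d_self : ∀ x, d x x = 0
  d_symm : ∀ x y, d x y = d y x
  d_triangle : ∀ x y z, d x z ≤ d x y + d y z
  d_nonneg : ∀ x y, 0 ≤ d x y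
  d_le_one : ∀ x y, d x y ≤ 1

/-- Uniform continuity of a map between diameter-≤1 pseudometric spaces. -/
def UnifCont (X Y : PMet) (f : X.carrier → Y.carrier) : Prop :=
  ∀ e : ℝ, 0 < e → ∃ δ : ℝ, 0 < δ ∧ ∀ x y, X.d x y < δ → Y.d (f x) (f y) < e

/-- A modulus of uniform continuity: increasing, infima-preserving, fixing 0,
    mapping [0,1] into [0,1]. -/
def IsModulus (μ : ℝ → ℝ) : Prop :=
  μ 0 = 0 ∧
  (∀ r ∈ Icc (0:ℝ) 1, μ r ∈ Icc (0:ℝ) 1) ∧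
  (∀ r s, r ∈ Icc (0:ℝ) 1 → s ∈ Icc (0:ℝ) 1 → r ≤ s → μ r ≤ μ s) ∧
  (∀ S : Set ℝ, S.Nonempty → S ⊆ Icc (0:ℝ) 1 → μ (sInf S) = sInf (μ '' S))

/-- `f` is uniformly continuous with modulus `μ`. -/
def HasModulus (X Y : PMet) (f : X.carrier → Y.carrier) (μ : ℝ → ℝ) : Prop :=
  ∀ x y, Y.d (f x) (f y) ≤ μ (X.d x y)

/-- An ε-predicate on `X`: a monotone family of subsets, preserving nonempty
    infima as intersections, satisfying the ε-continuity condition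
    (with truncated addition on [0,1]). -/
def IsPred (X : PMet) (μ : ℝ → ℝ) (R : ℝ → Set X.carrier) : Prop :=
  (∀ r s, r ∈ Icc (0:ℝ) 1 → s ∈ Icc (0:ℝ) 1 → r ≤ s → R r ⊆ R s) ∧
  (∀ S : Set ℝ, S.Nonempty → S ⊆ Icc (0:ℝ) 1 → R (sInf S) = ⋂ r ∈ S, R r) ∧
  (∀ r s, r ∈ Icc (0:ℝ) 1 → s ∈ Icc (0:ℝ) 1 → ∀ x y, x ∈ R r → X.d x y ≤ s →
     y ∈ R (min (r + μ s) 1))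

/-- The product pseudometric space with the max metric. -/
def prodPMet (Y Z : PMet) : PMet where
  carrier := Y.carrier × Z.carrier
  d p q := max (Y.d p.1 q.1) (Z.d p.2 q.2)
  d_self p := by simp [Y.d_self, Z.d_self]
  d_symm p q := by (try simp only []); rw [Y.d_symm p.1 q.1, Z.d_symm p.2 q.2]
  d_triangle p q r := max_le
    (le_trans (Y.d_triangle _ _ _) (add_le_add (le_max_left _ _) (le_max_left _ _)))
    (le_trans (Z.d_triangle _ _ _) (add_le_add (le_max_right _ _) (le_max_right _ _)))
  d_nonneg p q := le_trans (Y.d_nonneg _ _) (le_max_left _ _)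
  d_le_one p q := max_le (Y.d_le_one _ _) (Z.d_le_one _ _)

/-- `l` is equivalent, over its codomain, to an isometric embedding. -/
def EquivToIsoEmb (W C : PMet) (l : W.carrier → C.carrier) : Prop :=
  ∃ (A : PMet) (i : A.carrier → C.carrier) (φ : W.carrier → A.carrier)
    (ψ : A.carrier → W.carrier),
    UnifCont W A φ ∧ UnifCont A W ψ ∧ UnifCont A C i ∧
    Function.Injective i ∧ (∀ a b, C.d (i a) (i b) = A.d a b) ∧
    φ ∘ ψ = id ∧ ψ ∘ φ = id ∧ i ∘ φ = l

/-- maps equivalent to isometric embeddings (i.e. regular monos)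
    are closed under composition. -/
theorem comp_equiv_to_isometric_embedding (W X Z : PMet)
    (l : W.carrier → X.carrier) (m : X.carrier → Z.carrier)
    (hl : UnifCont W X l) (hm : UnifCont X Z m)
    (hle : EquivToIsoEmb W X l) (hme : EquivToIsoEmb X Z m) :
    EquivToIsoEmb W Z (m ∘ l) := by
  obtain ⟨A, i, φ, ψ, hφ, hψ, hi, hiinj, hiiso, hφψ, hψφ, hil⟩ := hle
  obtain ⟨B, j, φ', ψ', hφ', hψ', hj, hjinj, hjiso, hφψ', hψφ', hjm⟩ := hme
  have hψφx : ∀ x, ψ (φ x) = x := fun x => congrFun hψφ x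
  have hψφx' : ∀ x, ψ' (φ' x) = x := fun x => congrFun hψφ' x
  have hlx : ∀ x, i (φ x) = l x := fun x => congrFun hil x
  have hmx : ∀ x, j (φ' x) = m x := fun x => congrFun hjm x
  have hlinj : Function.Injective l := by
    rw [← hil]
    exact hiinj.comp (Function.LeftInverse.injective hψφx)
  have hminj : Function.Injective m := by
    rw [← hjm]
    exact hjinj.comp (Function.LeftInverse.injective hψφx')
  -- key uniform continuity facts
  have hXl : ∀ x y, X.d (l x) (l y) = A.d (φ x) (φ y) := by
    intro x y; rw [← hlx, ← hlx, hiiso]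
  have hZm : ∀ x y, Z.d (m x) (m y) = B.d (φ' x) (φ' y) := by
    intro x y; rw [← hmx, ← hmx, hjiso]
  refine ⟨⟨W.carrier, fun x y => Z.d (m (l x)) (m (l y)), fun x => Z.d_self _,
    fun x y => Z.d_symm _ _, fun x y z => Z.d_triangle _ _ _,
    fun x y => Z.d_nonneg _ _, fun x y => Z.d_le_one _ _⟩,
    m ∘ l, id, id, ?_, ?_, ?_, hminj.comp hlinj, fun a b => rfl, rfl, rfl, rfl⟩
  · -- UnifCont W A' id : W.d small → Z.d (m (l x)) (m (l y)) small
    intro e he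
    obtain ⟨δ₁, hδ₁, h₁⟩ := hm e he
    obtain ⟨δ₂, hδ₂, h₂⟩ := hl δ₁ hδ₁
    exact ⟨δ₂, hδ₂, fun x y h => h₁ _ _ (h₂ _ _ h)⟩
  · -- UnifCont A' W id : Z.d (m (l x)) (m (l y)) small → W.d small
    intro e he
    obtain ⟨δ₁, hδ₁, h₁⟩ := hψ e he
    obtain ⟨δ₂, hδ₂, h₂⟩ := hψ' δ₁ hδ₁
    refine ⟨δ₂, hδ₂, fun x y h => ?_⟩
    have hx : X.d (l x) (l y) < δ₁ := by
      have := h₂ (φ' (l x)) (φ' (l y)) (by rwa [← hZm])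
      rwa [hψφx', hψφx'] at this
    have := h₁ (φ x) (φ y) (by rwa [← hXl])
    rwa [hψφx, hψφx] at this
  · -- UnifCont A' Z (m ∘ l)
    intro e he
    exact ⟨e, he, fun x y h => h⟩
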